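/- Let q ≥ 2, let 𝒯 be an SLP representing T, and suppose X_j is a right q-gram neighbor of X_i. If |val(X_{r(i)})| < q, then i = rm_q(X_{ℓ(j)}), i.e., X_i is the label of the deepest node on the rightmost path of the derivation subtree rooted at a node labeled X_{ℓ(j)} whose derived string has length at least q; in particular, in this case the left q-gram neighbor of X_j is uniquely determined, and moreover |val(X_{ℓ(j)})| ≥ q. -/

import Mathlib

/-- A straight line program over alphabet `α`: variables are `Fin n` (variable
`X_i` of the paper corresponds to index `i-1`), each with either a terminal
rule (a single character) or a nonterminal rule `X_i → X_j X_k` with `j,k < i`. -/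
structure SLP (α : Type) where
  n : ℕ
  npos : 0 < n
  rule : Fin n → α ⊕ (Fin n × Fin n)
  wf : ∀ i jk, rule i = Sum.inr jk → jk.1 < i ∧ jk.2 < i

namespace SLP

variable {α : Type}

/-- the string `val(X_i)` derived by a variable -/
def val (S : SLP α) (i : Fin S.n) : List α :=
  match h : S.rule i with
  | Sum.inl a => [a]
  | Sum.inr jk =>
    have _h1 := (S.wf i jk h).1
    have _h2 := (S.wf i jk h).2
    S.val jk.1 ++ S.val jk.2
termination_by i.val

/-- the last variable `X_n` -/
def lastIdx (S : SLP α) : Fin S.n := ⟨S.n - 1, Nat.sub_lt S.npos Nat.one_pos⟩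

/-- the string `T` represented by the SLP -/
def text (S : SLP α) : List α := S.val S.lastIdx

/-- `T([i:j])`: the (1-based, inclusive) substring of a string -/
def substr (T : List α) (i j : ℕ) : List α := (T.drop (i - 1)).take (j + 1 - i)

/-- `pre(T,q)` -/
def spre (T : List α) (q : ℕ) : List α := T.take q

/-- `suf(T,q)` -/
def ssuf (T : List α) (q : ℕ) : List α := T.drop (T.length - q)

/-- `pre([b:e],q)` for intervals of positions -/
def ipre (b e q : ℕ) : Finset ℕ := Finset.Icc b (min (b + q - 1) e)

/-- `suf([b:e],q)` for intervals of positions -/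
def isuf (b e q : ℕ) : Finset ℕ := Finset.Icc (max b (e + 1 - q)) e

/-- `Occ(T,P)`: the set of (1-based) occurrences of `P` in `T` -/
def Occ [DecidableEq α] (T P : List α) : Finset ℕ :=
  (Finset.Icc 1 T.length).filter fun k => substr T k (k + P.length - 1) = P

/-- the multiset of labels of the nodes of the derivation tree rooted at
a node labeled `X_i` -/
def occsFrom (S : SLP α) (i : Fin S.n) : Multiset (Fin S.n) :=
  match h : S.rule i with
  | Sum.inl _ => {i}
  | Sum.inr jk =>
    have _h1 := (S.wf i jk h).1
    have _h2 := (S.wf i jk h).2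
    i ::ₘ (S.occsFrom jk.1 + S.occsFrom jk.2)
termination_by i.val

/-- `vOcc(X_i)`: the number of nodes of the derivation tree labeled `X_i` -/
def vOcc (S : SLP α) (i : Fin S.n) : ℕ := (S.occsFrom S.lastIdx).count i

/-- the string `t_i = suf(val(X_{ℓ(i)}),q-1) pre(val(X_{r(i)}),q-1)`
(and `[]` for a terminal rule) -/
def tstr (S : SLP α) (q : ℕ) (i : Fin S.n) : List α :=
  match S.rule i with
  | Sum.inl _ => []
  | Sum.inr jk => ssuf (S.val jk.1) (q - 1) ++ spre (S.val jk.2) (q - 1)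

/-- `label(X_i) = t_i([q:|t_i|])` -/
def labelStr (S : SLP α) (q : ℕ) (i : Fin S.n) : List α := (S.tstr q i).drop (q - 1)

/-- Nodes of the derivation tree are represented by the path from the root
(`false` = go to left child, `true` = go to right child).  `descend i p`
returns the label of the node reached from a node labeled `X_i` by path `p`. -/
def descend (S : SLP α) : Fin S.n → List Bool → Option (Fin S.n)
  | i, [] => some i
  | i, b :: p =>
    match S.rule i with
    | Sum.inl _ => none
    | Sum.inr jk => S.descend (if b then jk.2 else jk.1) p

/-- the label of the node of the derivation tree reached by path `p` from the root -/
def nodeVar (S : SLP α) (p : List Bool) : Option (Fin S.n) := S.descend S.lastIdx p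

/-- `p` is a valid node of the derivation tree -/
def IsNode (S : SLP α) (p : List Bool) : Prop := (S.nodeVar p).isSome

/-- the 0-based offset in `val(X_i)` of the part derived below path `p` -/
def offsetFrom (S : SLP α) : Fin S.n → List Bool → ℕ
  | _, [] => 0
  | i, b :: p =>
    match S.rule i with
    | Sum.inl _ => 0
    | Sum.inr jk =>
      if b then (S.val jk.1).length + S.offsetFrom jk.2 p
      else S.offsetFrom jk.1 p

/-- the 0-based offset in `T` of the interval derived by node `p` -/
def offset (S : SLP α) (p : List Bool) : ℕ := S.offsetFrom S.lastIdx p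

/-- `itv(v)`: the (1-based) interval of positions of `T` derived by node `p` -/
def itv (S : SLP α) (p : List Bool) : Finset ℕ :=
  match S.nodeVar p with
  | some i => Finset.Icc (S.offset p + 1) (S.offset p + (S.val i).length)
  | none => ∅

/-- `p = ξ(b,e)`: `p` is the deepest node whose interval contains `[b:e]`,
i.e. `itv(p) ⊇ [b:e]` and no proper descendant of `p` satisfies this. -/
def Stabs (S : SLP α) (p : List Bool) (b e : ℕ) : Prop :=
  S.IsNode p ∧ Finset.Icc b e ⊆ S.itv p ∧
  ∀ p' : List Bool, p <+: p' → p ≠ p' → S.IsNode p' → ¬ Finset.Icc b e ⊆ S.itv p'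

/-- `X_j` is a right `q`-gram neighbor of `X_i` -/
def RightNbr (S : SLP α) (q : ℕ) (i j : Fin S.n) : Prop :=
  i ≠ j ∧ ∃ u p p', 1 ≤ u ∧ u + q ≤ S.text.length ∧
    S.Stabs p u (u + q - 1) ∧ S.nodeVar p = some i ∧
    S.Stabs p' (u + 1) (u + q) ∧ S.nodeVar p' = some j

/-- `lm_q(X_i)`: the last variable of length `≥ q` on the sequence `i, ℓ(i), ℓ(ℓ(i)), …`
(meaningful when `|val(X_i)| ≥ q`) -/
def lm (S : SLP α) (q : ℕ) (i : Fin S.n) : Fin S.n :=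
  match h : S.rule i with
  | Sum.inl _ => i
  | Sum.inr jk =>
    have := (S.wf i jk h).1
    if (S.val jk.1).length < q then i else S.lm q jk.1
termination_by i.val

/-- `rm_q(X_i)`: the last variable of length `≥ q` on the sequence `i, r(i), r(r(i)), …` -/
def rm (S : SLP α) (q : ℕ) (i : Fin S.n) : Fin S.n :=
  match h : S.rule i with
  | Sum.inl _ => i
  | Sum.inr jk =>
    have := (S.wf i jk h).2
    if (S.val jk.2).length < q then i else S.rm q jk.2
termination_by i.val

/-- `lm_q` returning `null` (`none`) when `|val(X_i)| < q` -/
def lmOpt (S : SLP α) (q : ℕ) (i : Fin S.n) : Option (Fin S.n) :=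
  if (S.val i).length < q then none else some (S.lm q i)

/-- `rm_q` returning `null` (`none`) when `|val(X_i)| < q` -/
def rmOpt (S : SLP α) (q : ℕ) (i : Fin S.n) : Option (Fin S.n) :=
  if (S.val i).length < q then none else some (S.rm q i)

/-- `LSpine S i k`: `k` occurs in the sequence `i, ℓ(i), ℓ(ℓ(i)), …`
(the leftmost path of the derivation subtree rooted at a node labeled `X_i`) -/
inductive LSpine (S : SLP α) : Fin S.n → Fin S.n → Prop
  | refl (i : Fin S.n) : LSpine S i i
  | step {i k : Fin S.n} {jk : Fin S.n × Fin S.n} :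
      S.rule i = Sum.inr jk → LSpine S jk.1 k → LSpine S i k

end SLP

/-! Both `ξ(u, u+q-1)` and `ξ(u+1, u+q)` contain position `u+1`, so one of them is an ancestor
of the other, and each of the two intervals straddles the boundary between the children of its
node. If `ξ(u+1, u+q)` lay below `ξ(u, u+q-1)` it would lie in the right child, so
`|val(X_{r(i)})| ≥ q`. Otherwise `ξ(u, u+q-1)` lies in the left child of `ξ(u+1, u+q)`, and as
the two intervals end at most one position apart, the node `ξ(u, u+q-1)` ends exactly where
`val(X_{ℓ(j)})` ends. Its right child then derives fewer than `q` characters, so it is the last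
node of length `≥ q` on the rightmost path below `X_{ℓ(j)}`. Uniqueness follows because every
left neighbor of `X_j` falls under the second alternative once `|val(X_{ℓ(j)})| ≥ q`. -/

namespace SLP

variable {α : Type} {S : SLP α}

theorem val_of_rule_inl {i : Fin S.n} {a : α} (h : S.rule i = Sum.inl a) : S.val i = [a] := by
  rw [val]; split <;> simp_all

theorem val_of_rule_inr {i : Fin S.n} {jk : Fin S.n × Fin S.n} (h : S.rule i = Sum.inr jk) :
    S.val i = S.val jk.1 ++ S.val jk.2 := by
  rw [val]; split <;> simp_all

theorem length_val_of_rule_inr {i : Fin S.n} {jk : Fin S.n × Fin S.n}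
    (h : S.rule i = Sum.inr jk) :
    (S.val i).length = (S.val jk.1).length + (S.val jk.2).length := by
  rw [val_of_rule_inr h, List.length_append]

theorem length_val_pos (i : Fin S.n) : 0 < (S.val i).length := by
  rcases h : S.rule i with a | jk
  · simp [val_of_rule_inl h]
  · have := (S.wf i jk h).1
    have := length_val_pos jk.1
    rw [length_val_of_rule_inr h]; omega
termination_by i.val

theorem exists_rule_eq_inr_of_one_lt_length {i : Fin S.n} (h : 1 < (S.val i).length) :
    ∃ jk, S.rule i = Sum.inr jk := by
  rcases hr : S.rule i with a | jk
  · simp [val_of_rule_inl hr] at h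
  · exact ⟨jk, rfl⟩

theorem rm_of_rule_inr {i : Fin S.n} {jk : Fin S.n × Fin S.n} (h : S.rule i = Sum.inr jk)
    (q : ℕ) : S.rm q i = if (S.val jk.2).length < q then i else S.rm q jk.2 := by
  rw [rm]; split <;> simp_all

theorem descend_cons_of_rule_inl {k : Fin S.n} {a : α} (h : S.rule k = Sum.inl a) (b : Bool)
    (s : List Bool) : S.descend k (b :: s) = none := by
  rw [descend, h]

theorem descend_cons_of_rule_inr {k : Fin S.n} {jk : Fin S.n × Fin S.n}
    (h : S.rule k = Sum.inr jk) (b : Bool) (s : List Bool) :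
    S.descend k (b :: s) = S.descend (if b then jk.2 else jk.1) s := by
  rw [descend, h]

theorem offsetFrom_cons_of_rule_inr {k : Fin S.n} {jk : Fin S.n × Fin S.n}
    (h : S.rule k = Sum.inr jk) (b : Bool) (s : List Bool) :
    S.offsetFrom k (b :: s) =
      if b then (S.val jk.1).length + S.offsetFrom jk.2 s else S.offsetFrom jk.1 s := by
  rw [offsetFrom, h]

theorem descend_append (k : Fin S.n) (s t : List Bool) :
    S.descend k (s ++ t) = (S.descend k s).bind (S.descend · t) := by
  induction s generalizing k with
  | nil => rfl
  | cons b s ih =>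
    rcases h : S.rule k with a | jk
    · simp [descend_cons_of_rule_inl h]
    · rw [List.cons_append, descend_cons_of_rule_inr h, descend_cons_of_rule_inr h, ih]

theorem offsetFrom_append {k m : Fin S.n} {s : List Bool} (h : S.descend k s = some m)
    (t : List Bool) : S.offsetFrom k (s ++ t) = S.offsetFrom k s + S.offsetFrom m t := by
  induction s generalizing k with
  | nil => cases h; simp [offsetFrom]
  | cons b s ih =>
    rcases hr : S.rule k with a | jk
    · simp [descend_cons_of_rule_inl hr] at h
    rw [descend_cons_of_rule_inr hr] at h
    rw [List.cons_append, offsetFrom_cons_of_rule_inr hr, offsetFrom_cons_of_rule_inr hr]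
    cases b <;> simp only [Bool.false_eq_true, ↓reduceIte] at h ⊢ <;> rw [ih h]; omega

theorem offsetFrom_add_length_le {k m : Fin S.n} {s : List Bool} (h : S.descend k s = some m) :
    S.offsetFrom k s + (S.val m).length ≤ (S.val k).length := by
  induction s generalizing k with
  | nil => cases h; simp [offsetFrom]
  | cons b s ih =>
    rcases hr : S.rule k with a | jk
    · simp [descend_cons_of_rule_inl hr] at h
    rw [descend_cons_of_rule_inr hr] at h
    rw [offsetFrom_cons_of_rule_inr hr, length_val_of_rule_inr hr]
    cases b <;> simp only [Bool.false_eq_true, ↓reduceIte] at h ⊢ <;> have := ih h <;> omega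

theorem prefix_or_prefix_of_descend {k m₁ m₂ : Fin S.n} {s₁ s₂ : List Bool} {x : ℕ}
    (h₁ : S.descend k s₁ = some m₁) (h₂ : S.descend k s₂ = some m₂)
    (hx₁ : S.offsetFrom k s₁ ≤ x ∧ x < S.offsetFrom k s₁ + (S.val m₁).length)
    (hx₂ : S.offsetFrom k s₂ ≤ x ∧ x < S.offsetFrom k s₂ + (S.val m₂).length) :
    s₁ <+: s₂ ∨ s₂ <+: s₁ := by
  induction s₁ generalizing k s₂ x with
  | nil => exact Or.inl List.nil_prefix
  | cons b₁ t₁ ih =>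
    rcases s₂ with _ | ⟨b₂, t₂⟩
    · exact Or.inr List.nil_prefix
    rcases hr : S.rule k with a | jk
    · simp [descend_cons_of_rule_inl hr] at h₁
    rw [descend_cons_of_rule_inr hr] at h₁ h₂
    rw [offsetFrom_cons_of_rule_inr hr] at hx₁ hx₂
    have e₁ := offsetFrom_add_length_le h₁
    have e₂ := offsetFrom_add_length_le h₂
    simp only [List.cons_prefix_cons]
    cases b₁ <;> cases b₂ <;> simp only [Bool.false_eq_true, ↓reduceIte, true_and] at h₁ h₂ hx₁ hx₂ e₁ e₂ ⊢
    · exact ih h₁ h₂ hx₁ hx₂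
    · omega
    · omega
    · exact ih (x := x - (S.val jk.1).length) h₁ h₂ (by omega) (by omega)

theorem rm_eq_of_descend {q : ℕ} {k m : Fin S.n} {s : List Bool} {jkm : Fin S.n × Fin S.n}
    (hd : S.descend k s = some m)
    (hal : S.offsetFrom k s + (S.val m).length = (S.val k).length)
    (hq : q ≤ (S.val m).length) (hrm : S.rule m = Sum.inr jkm)
    (hlt : (S.val jkm.2).length < q) : S.rm q k = m := by
  induction s generalizing k with
  | nil => cases hd; rw [rm_of_rule_inr hrm, if_pos hlt]
  | cons b s ih =>
    rcases hr : S.rule k with a | jk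
    · simp [descend_cons_of_rule_inl hr] at hd
    rw [descend_cons_of_rule_inr hr] at hd
    rw [offsetFrom_cons_of_rule_inr hr, length_val_of_rule_inr hr] at hal
    have := offsetFrom_add_length_le hd
    cases b <;> simp only [Bool.false_eq_true, ↓reduceIte] at hd hal this
    · have := S.length_val_pos jk.2
      omega
    · rw [rm_of_rule_inr hr, if_neg (by omega)]
      exact ih hd (by omega)

theorem nodeVar_append {p : List Bool} {m : Fin S.n} (h : S.nodeVar p = some m)
    (t : List Bool) : S.nodeVar (p ++ t) = S.descend m t := by
  rw [nodeVar, descend_append, ← nodeVar, h]; rfl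

theorem offset_append {p : List Bool} {m : Fin S.n} (h : S.nodeVar p = some m)
    (t : List Bool) : S.offset (p ++ t) = S.offset p + S.offsetFrom m t :=
  offsetFrom_append h t

theorem itv_of_nodeVar {p : List Bool} {m : Fin S.n} (h : S.nodeVar p = some m) :
    S.itv p = Finset.Icc (S.offset p + 1) (S.offset p + (S.val m).length) := by
  rw [itv]; split <;> simp_all

section Children

variable {p : List Bool} {m : Fin S.n} {jk : Fin S.n × Fin S.n}

theorem nodeVar_left (h : S.nodeVar p = some m) (hr : S.rule m = Sum.inr jk) :
    S.nodeVar (p ++ [false]) = some jk.1 := by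
  rw [nodeVar_append h, descend_cons_of_rule_inr hr]; rfl

theorem nodeVar_right (h : S.nodeVar p = some m) (hr : S.rule m = Sum.inr jk) :
    S.nodeVar (p ++ [true]) = some jk.2 := by
  rw [nodeVar_append h, descend_cons_of_rule_inr hr]; rfl

theorem offset_left (h : S.nodeVar p = some m) (hr : S.rule m = Sum.inr jk) :
    S.offset (p ++ [false]) = S.offset p := by
  rw [offset_append h, offsetFrom_cons_of_rule_inr hr]; rfl

theorem offset_right (h : S.nodeVar p = some m) (hr : S.rule m = Sum.inr jk) :
    S.offset (p ++ [true]) = S.offset p + (S.val jk.1).length := by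
  rw [offset_append h, offsetFrom_cons_of_rule_inr hr]; rfl

end Children

theorem offset_le_of_prefix {p p' : List Bool} {m m' : Fin S.n} (hp : S.nodeVar p = some m)
    (hp' : S.nodeVar p' = some m') (h : p <+: p') :
    S.offset p ≤ S.offset p' ∧ S.offset p' + (S.val m').length ≤ S.offset p + (S.val m).length := by
  obtain ⟨t, rfl⟩ := h
  rw [nodeVar_append hp] at hp'
  have := offsetFrom_add_length_le hp'
  rw [offset_append hp]
  omega

theorem prefix_or_prefix_of_mem_itv {p p' : List Bool} {x : ℕ} (hx : x ∈ S.itv p)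
    (hx' : x ∈ S.itv p') : p <+: p' ∨ p' <+: p := by
  rcases hp : S.nodeVar p with _ | m
  · simp [itv, hp] at hx
  rcases hp' : S.nodeVar p' with _ | m'
  · simp [itv, hp'] at hx'
  rw [itv_of_nodeVar hp, Finset.mem_Icc] at hx
  rw [itv_of_nodeVar hp', Finset.mem_Icc] at hx'
  exact prefix_or_prefix_of_descend (x := x - 1) hp hp' (by unfold offset at hx; omega)
    (by unfold offset at hx'; omega)

theorem exists_eq_append_cons_of_prefix {p p' : List Bool} (h : p <+: p') (hne : p ≠ p') :
    ∃ c t, p' = p ++ [c] ++ t := by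
  obtain ⟨_ | ⟨c, t⟩, rfl⟩ := h
  · exact absurd (List.append_nil p).symm hne
  · exact ⟨c, t, by simp⟩

namespace Stabs

variable {p : List Bool} {b e : ℕ} {m : Fin S.n}

theorem bounds (hs : S.Stabs p b e) (hp : S.nodeVar p = some m) (hbe : b ≤ e) :
    S.offset p + 1 ≤ b ∧ e ≤ S.offset p + (S.val m).length := by
  have := hs.2.1
  rwa [itv_of_nodeVar hp, Finset.Icc_subset_Icc_iff hbe] at this

theorem not_subset_itv_child (hs : S.Stabs p b e) (hp : S.nodeVar p = some m)
    {jk : Fin S.n × Fin S.n} (hr : S.rule m = Sum.inr jk) (c : Bool) :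
    ¬ Finset.Icc b e ⊆ S.itv (p ++ [c]) :=
  hs.2.2 _ (List.prefix_append _ _) (by simp) <| by
    rw [IsNode, nodeVar_append hp, descend_cons_of_rule_inr hr]; rfl

theorem straddle {jk : Fin S.n × Fin S.n} (hs : S.Stabs p b e) (hp : S.nodeVar p = some m)
    (hr : S.rule m = Sum.inr jk) :
    b ≤ S.offset p + (S.val jk.1).length ∧ S.offset p + (S.val jk.1).length < e := by
  have hl := hs.not_subset_itv_child hp hr false
  have hr' := hs.not_subset_itv_child hp hr true
  rw [itv_of_nodeVar (nodeVar_left hp hr), offset_left hp hr] at hl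
  rw [itv_of_nodeVar (nodeVar_right hp hr), offset_right hp hr] at hr'
  have hbe : b ≤ e := by
    by_contra h
    exact hl (by simp [Finset.Icc_eq_empty_of_lt (not_le.mp h)])
  have := hs.bounds hp hbe
  have := length_val_of_rule_inr hr
  rw [Finset.Icc_subset_Icc_iff hbe] at hl hr'
  omega

end Stabs

theorem rightNbr_cases {q : ℕ} {i j : Fin S.n} {jkj : Fin S.n × Fin S.n}
    (hrj : S.rule j = Sum.inr jkj) (hnbr : S.RightNbr q i j) :
    ∃ jki, S.rule i = Sum.inr jki ∧
      (((S.val jkj.1).length < q ∧ q ≤ (S.val jki.2).length) ∨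
        (i = S.rm q jkj.1 ∧ q ≤ (S.val jkj.1).length)) := by
  obtain ⟨hne, u, p, p', -, -, hs, hp, hs', hp'⟩ := hnbr
  have hj := hs'.straddle hp' hrj
  have hj' := hs'.bounds hp' (by omega)
  have hi' := hs.bounds hp (by omega)
  -- `ξ(u+1, u+q)` straddles a boundary, so `q ≥ 2` and hence `|val(X_i)| ≥ 2`
  obtain ⟨jki, hri⟩ := exists_rule_eq_inr_of_one_lt_length (i := i) (by omega)
  have hi := hs.straddle hp hri
  refine ⟨jki, hri, ?_⟩
  have hpp' : p ≠ p' := by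
    rintro rfl
    exact hne (Option.some_injective _ (hp.symm.trans hp'))
  rcases prefix_or_prefix_of_mem_itv (x := u + 1)
    (by rw [itv_of_nodeVar hp, Finset.mem_Icc]; omega)
    (by rw [itv_of_nodeVar hp', Finset.mem_Icc]; omega) with h | h
  · obtain ⟨c, t, rfl⟩ := exists_eq_append_cons_of_prefix h hpp'
    cases c
    · have := offset_le_of_prefix (nodeVar_left hp hri) hp' (List.prefix_append _ _)
      rw [offset_left hp hri] at this
      omega
    · have := offset_le_of_prefix (nodeVar_right hp hri) hp' (List.prefix_append _ _)
      rw [offset_right hp hri] at this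
      omega
  · obtain ⟨c, t, rfl⟩ := exists_eq_append_cons_of_prefix h hpp'.symm
    cases c
    · have := offset_le_of_prefix (nodeVar_left hp' hrj) hp (List.prefix_append _ _)
      rw [offset_left hp' hrj] at this
      rw [nodeVar_append (nodeVar_left hp' hrj)] at hp
      rw [offset_append (nodeVar_left hp' hrj), offset_left hp' hrj] at hi hi' this
      have := length_val_of_rule_inr hri
      exact Or.inr ⟨(rm_eq_of_descend hp (by omega) (by omega) hri (by omega)).symm, by omega⟩
    · have := offset_le_of_prefix (nodeVar_right hp' hrj) hp (List.prefix_append _ _)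
      rw [offset_right hp' hrj] at this
      omega

end SLP

theorem stmt4_general {α : Type} (q : ℕ) (S : SLP α)
    (i j : Fin S.n) (jki jkj : Fin S.n × Fin S.n)
    (hri : S.rule i = Sum.inr jki) (hrj : S.rule j = Sum.inr jkj)
    (hnbr : S.RightNbr q i j) (hlen : (S.val jki.2).length < q) :
    i = S.rm q jkj.1 ∧ (∀ i', S.RightNbr q i' j → i' = i) ∧
      q ≤ (S.val jkj.1).length := by
  obtain ⟨jki', hri', hcases⟩ := SLP.rightNbr_cases hrj hnbr
  obtain rfl : jki' = jki := Sum.inr_injective (hri'.symm.trans hri)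
  obtain ⟨hrm, hℓ⟩ := hcases.resolve_left (by omega)
  refine ⟨hrm, fun i' hnbr' => ?_, hℓ⟩
  obtain ⟨_, -, hcases'⟩ := SLP.rightNbr_cases hrj hnbr'
  exact (hcases'.resolve_left (by omega)).1.trans hrm.symm

/-- if `X_j` is a right `q`-gram neighbor of `X_i` and
`|val(X_{r(i)})| < q`, then `i = rm_q(X_{ℓ(j)})`; in particular the left
`q`-gram neighbor of `X_j` is uniquely determined, and `|val(X_{ℓ(j)})| ≥ q`. -/
theorem stmt4 {α : Type} (q : ℕ) (hq : 2 ≤ q) (S : SLP α)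
    (i j : Fin S.n) (jki jkj : Fin S.n × Fin S.n)
    (hri : S.rule i = Sum.inr jki) (hrj : S.rule j = Sum.inr jkj)
    (hnbr : S.RightNbr q i j) (hlen : (S.val jki.2).length < q) :
    i = S.rm q jkj.1 ∧ (∀ i', S.RightNbr q i' j → i' = i) ∧
      q ≤ (S.val jkj.1).length :=
  stmt4_general q S i j jki jkj hri hrj hnbr hlen
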